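/- arXiv:1304.5093 — 6 statements merged into one kernel-verified Lean document; each statement's English description precedes it below -/
import Mathlib

section
/- Let Z be a tail and W, W' subcurves of a nodal curve C. If Z is contained in W ∧ W', then Term_Z ∩ (Term_W ∪ Term_{W'}) is contained in Term_{W∧W'}. -/
open Set

/- Dual multigraph model of a nodal curve: vertices `V` are irreducible
components, edges `E` are nodes, with endpoint maps `s t : E → V`. -/

/-- The set of terminal points (edges of the cut) of a vertex subset `Z`. -/
def TermPts {V E : Type} (s t : E → V) (Z : Set V) : Set E :=
  {e | (s e ∈ Z ∧ t e ∉ Z) ∨ (t e ∈ Z ∧ s e ∉ Z)}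

/-- A subcurve is a nonempty proper subset of the components. -/
def Subcurve {V : Type} (Z : Set V) : Prop := Z.Nonempty ∧ Z ≠ Set.univ

/-- Connectivity of the induced sub-multigraph on `Z`. -/
def ConnOn {V E : Type} (s t : E → V) (Z : Set V) : Prop :=
  ∀ x ∈ Z, ∀ y ∈ Z,
    Relation.ReflTransGen
      (fun a b => a ∈ Z ∧ b ∈ Z ∧ ∃ e, (s e = a ∧ t e = b) ∨ (s e = b ∧ t e = a)) x y

/-- A tail is a subcurve with both sides connected. -/
def IsTail {V E : Type} (s t : E → V) (Z : Set V) : Prop :=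
  Subcurve Z ∧ ConnOn s t Z ∧ ConnOn s t Zᶜ

/-- `k_Z`, the number of terminal points of `Z`. -/
noncomputable def kcut {V E : Type} (s t : E → V) (Z : Set V) : ℕ :=
  (TermPts s t Z).ncard

/-- The pair `(Z, Z')` is free if the edge cuts are disjoint. -/
def FreePair {V E : Type} (s t : E → V) (Z Z' : Set V) : Prop :=
  TermPts s t Z ∩ TermPts s t Z' = ∅

/-- The pair `(Z, Z')` is perfect. -/
def PerfectPair {V : Type} (Z Z' : Set V) : Prop :=
  Z ⊆ Z' ∨ Z' ⊆ Z ∨ Zᶜ ⊆ Z' ∨ Z' ⊆ Zᶜ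

/-- An edge leaving `Z` and leaving `W ⊇ Y ⊇ Z` has its `Z`-endpoint in `Y` and its other
endpoint outside `W`, hence outside `Y`. -/
theorem termPts_inter_subset_of_subset_of_subset {V E : Type} (s t : E → V) {Z Y W : Set V}
    (hZY : Z ⊆ Y) (hYW : Y ⊆ W) :
    TermPts s t Z ∩ TermPts s t W ⊆ TermPts s t Y := by
  rintro e ⟨hZe | hZe, hWe | hWe⟩
  · exact Or.inl ⟨hZY hZe.1, fun ht => hWe.2 (hYW ht)⟩
  · exact absurd (hYW (hZY hZe.1)) hWe.2
  · exact absurd (hYW (hZY hZe.1)) hWe.2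
  · exact Or.inr ⟨hZY hZe.1, fun hs => hWe.2 (hYW hs)⟩

theorem stmt_3_general {V E : Type} (s t : E → V)
    (Z W W' : Set V)
    (h : Z ⊆ W ∩ W') :
    TermPts s t Z ∩ (TermPts s t W ∪ TermPts s t W') ⊆ TermPts s t (W ∩ W') := by
  rw [inter_union_distrib_left]
  exact union_subset
    (termPts_inter_subset_of_subset_of_subset s t h inter_subset_left)
    (termPts_inter_subset_of_subset_of_subset s t h inter_subset_right)

/-- Lemma 3.2 (iii): if `Z` is a tail contained in `W ∧ W'`, then
`Term_Z ∩ (Term_W ∪ Term_{W'}) ⊆ Term_{W∧W'}`. -/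
theorem stmt_3 {V E : Type} [Fintype V] [Fintype E] (s t : E → V)
    (hC : ConnOn s t Set.univ) (Z W W' : Set V)
    (hZ : IsTail s t Z) (hW : Subcurve W) (hW' : Subcurve W')
    (h : Z ⊆ W ∩ W') :
    TermPts s t Z ∩ (TermPts s t W ∪ TermPts s t W') ⊆ TermPts s t (W ∩ W') :=
  stmt_3_general s t Z W W' h
end

section
/- Let Z and Z' be tails of a nodal curve C with k_Z > 1 and k_{Z'} > 1. If Z ∧ Z' is a nonempty proper subcurve with k_{Z∧Z'} ∈ {1,2,3}, then in fact k_{Z∧Z'} > 1 and Z ∧ Z' is a tail. -/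
/-!
Because `Z` and `Zᶜ` are connected, the only subcurves whose cut lies inside `Term_Z` are `Z`
and `Zᶜ`; hence, when `k_Z, k_{Z'} > 1`, every subcurve whose cut lies inside
`Term_Z ∪ Term_{Z'} ⊇ Term_{Z ∧ Z'}` has at least two terminal points. This gives
`k_{Z ∧ Z'} > 1`, and if `Z ∧ Z'` were disconnected its cut would split into two disjoint such
cuts, so `k_{Z ∧ Z'} ≥ 4`. Finally `(Z ∧ Z')ᶜ = Zᶜ ∪ Z'ᶜ` is a union of two connected sets; it
is connected unless they are disjoint with no edge between them, and then
`k_{Z ∧ Z'} = k_Z + k_{Z'} ≥ 4`.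
-/

open Set

open Relation

section Defs

variable {V E : Type}

-- Definitionally the adjacency relation inside `ConnOn s t A`.
def InducedAdj (s t : E → V) (A : Set V) (a b : V) : Prop :=
  a ∈ A ∧ b ∈ A ∧ ∃ e, (s e = a ∧ t e = b) ∨ (s e = b ∧ t e = a)

def EdgeBetween (s t : E → V) (A B : Set V) : Prop :=
  ∃ e, (s e ∈ A ∧ t e ∈ B) ∨ (s e ∈ B ∧ t e ∈ A)

end Defs

variable {V E : Type} {s t : E → V}

theorem InducedAdj.symm {A : Set V} {a b : V} (h : InducedAdj s t A a b) :
    InducedAdj s t A b a :=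
  ⟨h.2.1, h.1, h.2.2.imp fun _ he => he.symm⟩

instance {A : Set V} : Std.Symm (InducedAdj s t A) :=
  ⟨fun _ _ => InducedAdj.symm⟩

theorem InducedAdj.mono {A B : Set V} (hAB : A ⊆ B) {a b : V} (h : InducedAdj s t A a b) :
    InducedAdj s t B a b :=
  ⟨hAB h.1, hAB h.2.1, h.2.2⟩

theorem termPts_compl (A : Set V) : TermPts s t Aᶜ = TermPts s t A := by
  ext e
  simp only [TermPts, mem_ofPred_eq, mem_compl_iff, not_not]
  tauto

theorem termPts_inter_subset (A B : Set V) :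
    TermPts s t (A ∩ B) ⊆ TermPts s t A ∪ TermPts s t B := by
  intro e he
  simp only [TermPts, mem_ofPred_eq, mem_inter_iff, mem_union] at he ⊢
  tauto

theorem notMem_or_notMem_of_mem_termPts {A : Set V} {e : E} (he : e ∈ TermPts s t A) :
    s e ∉ A ∨ t e ∉ A := by
  rcases he with ⟨-, h⟩ | ⟨-, h⟩
  exacts [.inr h, .inl h]

theorem ConnOn.subset_or_subset_compl {A S : Set V} (hA : ConnOn s t A)
    (hS : ∀ e ∈ TermPts s t S, s e ∉ A ∨ t e ∉ A) : A ⊆ S ∨ A ⊆ Sᶜ := by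
  by_contra! h
  obtain ⟨⟨x, hxA, hxS⟩, ⟨y, hyA, hyS⟩⟩ := And.imp not_subset.mp not_subset.mp h
  have reach_mem : ∀ z, ReflTransGen (InducedAdj s t A) y z → z ∈ S := by
    intro z hz
    induction hz with
    | refl => simpa using hyS
    | tail _ hbc ih =>
      obtain ⟨hb, hc, e, he⟩ := hbc
      by_contra hcS
      rcases he with ⟨rfl, rfl⟩ | ⟨rfl, rfl⟩
      · exact (hS e (.inl ⟨ih, hcS⟩)).elim (· hb) (· hc)
      · exact (hS e (.inr ⟨ih, hcS⟩)).elim (· hc) (· hb)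
  exact hxS (reach_mem x (hA y hyA x hxA))

theorem termPts_nonempty (hC : ConnOn s t univ) {S : Set V} (hS : Subcurve S) :
    (TermPts s t S).Nonempty := by
  by_contra! h
  rcases hC.subset_or_subset_compl (S := S) (by simp [h]) with h' | h'
  · exact hS.2 (univ_subset_iff.mp h')
  · obtain ⟨x, hx⟩ := hS.1
    exact h' (mem_univ x) hx

theorem eq_or_eq_compl_of_termPts_subset {Z S : Set V} (hZ : ConnOn s t Z)
    (hZc : ConnOn s t Zᶜ) (hS : Subcurve S) (hSZ : TermPts s t S ⊆ TermPts s t Z) :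
    S = Z ∨ S = Zᶜ := by
  have hZ_side := hZ.subset_or_subset_compl (S := S) fun e he =>
    notMem_or_notMem_of_mem_termPts (hSZ he)
  have hZc_side := hZc.subset_or_subset_compl (S := S) fun e he =>
    notMem_or_notMem_of_mem_termPts ((termPts_compl Z).symm ▸ hSZ he)
  obtain ⟨x, hx⟩ := hS.1
  rcases hZ_side with h1 | h1 <;> rcases hZc_side with h2 | h2
  · exact absurd (eq_univ_of_forall fun v => (em (v ∈ Z)).elim (h1 ·) (h2 ·)) hS.2
  · exact .inl (h1.antisymm' (compl_subset_compl.mp h2))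
  · exact .inr (h2.antisymm' (subset_compl_comm.mp h1))
  · exact absurd hx ((em (x ∈ Z)).elim (h1 ·) (h2 ·))

theorem not_termPts_subset_singleton {Z S : Set V} (hZ : ConnOn s t Z) (hZc : ConnOn s t Zᶜ)
    (hkZ : 1 < kcut s t Z) (hS : Subcurve S) {e : E} (he : e ∈ TermPts s t Z) :
    ¬TermPts s t S ⊆ {e} := by
  intro hSe
  have hZS : TermPts s t Z = TermPts s t S := by
    rcases eq_or_eq_compl_of_termPts_subset hZ hZc hS
      (hSe.trans (singleton_subset_iff.mpr he)) with rfl | rfl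
    · rfl
    · exact (termPts_compl Z).symm
  have hle := ncard_le_ncard (hZS ▸ hSe) (finite_singleton e)
  rw [ncard_singleton] at hle
  exact absurd hkZ (not_lt.mpr hle)

theorem one_lt_kcut_of_termPts_subset_union [Finite E] (hC : ConnOn s t univ)
    {Z Z' S : Set V} (hZ : ConnOn s t Z) (hZc : ConnOn s t Zᶜ) (hZ' : ConnOn s t Z')
    (hZ'c : ConnOn s t Z'ᶜ) (hkZ : 1 < kcut s t Z) (hkZ' : 1 < kcut s t Z')
    (hS : Subcurve S) (hSZ : TermPts s t S ⊆ TermPts s t Z ∪ TermPts s t Z') :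
    1 < kcut s t S := by
  have hpos : 0 < kcut s t S := (ncard_pos (toFinite _)).mpr (termPts_nonempty hC hS)
  by_contra! hle
  obtain ⟨e, he⟩ := ncard_eq_one.mp (le_antisymm hle hpos)
  rcases hSZ (he ▸ mem_singleton e) with heZ | heZ'
  · exact not_termPts_subset_singleton hZ hZc hkZ hS heZ he.subset
  · exact not_termPts_subset_singleton hZ' hZ'c hkZ' hS heZ' he.subset

theorem termPts_union_of_not_edgeBetween {A B : Set V} (hAB : Disjoint A B)
    (h : ¬EdgeBetween s t A B) : TermPts s t (A ∪ B) = TermPts s t A ∪ TermPts s t B := by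
  ext e
  have hsep := not_exists.mp h e
  have hs : s e ∈ A → s e ∉ B := fun h => disjoint_left.mp hAB h
  have ht : t e ∈ A → t e ∉ B := fun h => disjoint_left.mp hAB h
  simp only [TermPts, mem_ofPred_eq, mem_union]
  tauto

theorem disjoint_termPts_of_not_edgeBetween {A B : Set V} (hAB : Disjoint A B)
    (h : ¬EdgeBetween s t A B) : Disjoint (TermPts s t A) (TermPts s t B) := by
  refine disjoint_left.mpr fun e heA heB => ?_
  have hsep := not_exists.mp h e
  have hs : s e ∈ A → s e ∉ B := fun h => disjoint_left.mp hAB h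
  have ht : t e ∈ A → t e ∉ B := fun h => disjoint_left.mp hAB h
  simp only [TermPts, mem_ofPred_eq] at heA heB
  tauto

theorem kcut_union_of_not_edgeBetween [Finite E] {A B : Set V} (hAB : Disjoint A B)
    (h : ¬EdgeBetween s t A B) : kcut s t (A ∪ B) = kcut s t A + kcut s t B := by
  rw [kcut, termPts_union_of_not_edgeBetween hAB h,
    ncard_union_eq (disjoint_termPts_of_not_edgeBetween hAB h)]
  rfl

theorem exists_split_of_not_connOn {W : Set V} (hW : ¬ConnOn s t W) :
    ∃ X ⊆ W, X.Nonempty ∧ (W \ X).Nonempty ∧ ¬EdgeBetween s t X (W \ X) := by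
  simp only [ConnOn, not_forall] at hW
  obtain ⟨x, hx, y, hy, hxy⟩ := hW
  refine ⟨{v ∈ W | ReflTransGen (InducedAdj s t W) x v}, sep_subset _ _, ⟨x, hx, .refl⟩,
    ⟨y, hy, fun h => hxy h.2⟩, ?_⟩
  rintro ⟨e, ⟨hse, hteW, hte⟩ | ⟨⟨hseW, hse⟩, hte⟩⟩
  · exact hte ⟨hteW, hse.2.tail ⟨hse.1, hteW, e, .inl ⟨rfl, rfl⟩⟩⟩
  · exact hse ⟨hseW, hte.2.tail ⟨hte.1, hseW, e, .inr ⟨rfl, rfl⟩⟩⟩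

theorem ConnOn.union {A B : Set V} (hA : ConnOn s t A) (hB : ConnOn s t B)
    (hAB : (A ∩ B).Nonempty ∨ EdgeBetween s t A B) : ConnOn s t (A ∪ B) := by
  obtain ⟨a, ha, b, hb, hab⟩ :
      ∃ a ∈ A, ∃ b ∈ B, ReflTransGen (InducedAdj s t (A ∪ B)) a b := by
    rcases hAB with ⟨v, hvA, hvB⟩ | ⟨e, ⟨hs, ht⟩ | ⟨hs, ht⟩⟩
    · exact ⟨v, hvA, v, hvB, .refl⟩
    · exact ⟨s e, hs, t e, ht, .single ⟨.inl hs, .inr ht, e, .inl ⟨rfl, rfl⟩⟩⟩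
    · exact ⟨t e, ht, s e, hs, .single ⟨.inl ht, .inr hs, e, .inr ⟨rfl, rfl⟩⟩⟩
  have reach_a : ∀ v ∈ A ∪ B, ReflTransGen (InducedAdj s t (A ∪ B)) v a := by
    rintro v (hv | hv)
    · exact ReflTransGen.mono (fun _ _ => InducedAdj.mono subset_union_left) _ _ (hA v hv a ha)
    · exact (ReflTransGen.mono (fun _ _ => InducedAdj.mono subset_union_right) _ _
        (hB v hv b hb)).trans (symm_of _ hab)
  exact fun x hx y hy => (reach_a x hx).trans (symm_of _ (reach_a y hy))

theorem connOn_of_forall_one_lt_kcut [Finite E] {W : Set V} (hW : W ≠ univ)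
    (hk : kcut s t W ≤ 3)
    (h : ∀ S, Subcurve S → TermPts s t S ⊆ TermPts s t W → 1 < kcut s t S) :
    ConnOn s t W := by
  by_contra hconn
  obtain ⟨X, hXW, hX, hY, hXY⟩ := exists_split_of_not_connOn hconn
  have hcut := termPts_union_of_not_edgeBetween disjoint_sdiff_right hXY
  have hk_sum := kcut_union_of_not_edgeBetween disjoint_sdiff_right hXY
  rw [union_sdiff_cancel hXW] at hcut hk_sum
  have hWproper : W ⊂ univ := ssubset_univ_iff.mpr hW
  have hkX := h X ⟨hX, (hXW.trans_ssubset hWproper).ne⟩ (hcut ▸ subset_union_left)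
  have hkY := h (W \ X) ⟨hY, (sdiff_subset.trans_ssubset hWproper).ne⟩
    (hcut ▸ subset_union_right)
  omega

theorem connOn_compl_inter [Finite E] {Z Z' : Set V} (hZc : ConnOn s t Zᶜ)
    (hZ'c : ConnOn s t Z'ᶜ) (hk : kcut s t (Z ∩ Z') < kcut s t Z + kcut s t Z') :
    ConnOn s t (Z ∩ Z')ᶜ := by
  rw [compl_inter]
  refine hZc.union hZ'c ?_
  by_contra! hsep
  have hk_sum := kcut_union_of_not_edgeBetween (disjoint_iff_inter_eq_empty.mpr hsep.1) hsep.2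
  rw [← compl_inter, kcut, kcut, kcut, termPts_compl, termPts_compl, termPts_compl] at hk_sum
  exact hk.ne hk_sum

theorem stmt_4_general {V E : Type} [Fintype E] (s t : E → V)
    (hC : ConnOn s t Set.univ) (Z Z' : Set V)
    (hZ : IsTail s t Z) (hZ' : IsTail s t Z')
    (hkZ : 1 < kcut s t Z) (hkZ' : 1 < kcut s t Z')
    (hsub : Subcurve (Z ∩ Z'))
    (hk : kcut s t (Z ∩ Z') ∈ ({1, 2, 3} : Set ℕ)) :
    1 < kcut s t (Z ∩ Z') ∧ IsTail s t (Z ∩ Z') := by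
  have hk3 : kcut s t (Z ∩ Z') ≤ 3 := by
    simp only [mem_insert_iff, mem_singleton_iff] at hk
    omega
  have one_lt : ∀ S, Subcurve S → TermPts s t S ⊆ TermPts s t (Z ∩ Z') → 1 < kcut s t S :=
    fun S hS hSW => one_lt_kcut_of_termPts_subset_union hC hZ.2.1 hZ.2.2 hZ'.2.1 hZ'.2.2
      hkZ hkZ' hS (hSW.trans (termPts_inter_subset Z Z'))
  exact ⟨one_lt _ hsub subset_rfl, hsub, connOn_of_forall_one_lt_kcut hsub.2 hk3 one_lt,
    connOn_compl_inter hZ.2.2 hZ'.2.2 (by omega)⟩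

/-- Lemma 3.3 (i): for tails `Z, Z'` with `k_Z > 1`, `k_{Z'} > 1`, if `Z ∧ Z'`
is a nonempty proper subcurve with `k_{Z∧Z'} ∈ {1,2,3}`, then `k_{Z∧Z'} > 1`
and `Z ∧ Z'` is a tail. -/
theorem stmt_4 {V E : Type} [Fintype V] [Fintype E] (s t : E → V)
    (hC : ConnOn s t Set.univ) (Z Z' : Set V)
    (hZ : IsTail s t Z) (hZ' : IsTail s t Z')
    (hkZ : 1 < kcut s t Z) (hkZ' : 1 < kcut s t Z')
    (hsub : Subcurve (Z ∩ Z'))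
    (hk : kcut s t (Z ∩ Z') ∈ ({1, 2, 3} : Set ℕ)) :
    1 < kcut s t (Z ∩ Z') ∧ IsTail s t (Z ∩ Z') :=
  stmt_4_general s t hC Z Z' hZ hZ' hkZ hkZ' hsub hk
end

section
/- Let Z be a tail of a nodal curve C and Z' a tail such that the set of nodes Term_Z is contained in Z' viewed as a subcurve. Then either Z ⊆ Z' or Z^c ⊆ Z'. -/
open Set

private lemma cross_step {V : Type} {r : V → V → Prop} {Z : Set V} {x y : V}
    (h : Relation.ReflTransGen r x y) (hx : x ∈ Z) (hy : y ∉ Z) :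
    ∃ a b, r a b ∧ a ∈ Z ∧ b ∉ Z := by
  induction h with
  | refl => exact absurd hx hy
  | @tail b c _ hbc ih =>
    by_cases hm : b ∈ Z
    · exact ⟨_, _, hbc, hm, hy⟩
    · exact ih hm

/-- Lemma 3.4 (i): if `Z` and `Z'` are tails and every terminal point of `Z`
lies in `Z'` (both endpoints of the edge belong to `Z'`), then `Z ⊆ Z'` or
`Zᶜ ⊆ Z'`. -/
theorem stmt_6 {V E : Type} [Fintype V] [Fintype E] (s t : E → V)
    (hC : ConnOn s t Set.univ) (Z Z' : Set V)
    (hZ : IsTail s t Z) (hZ' : IsTail s t Z')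
    (h : ∀ e ∈ TermPts s t Z, s e ∈ Z' ∧ t e ∈ Z') :
    Z ⊆ Z' ∨ Zᶜ ⊆ Z' := by
  by_contra hcon
  push_neg at hcon
  obtain ⟨h1, h2⟩ := hcon
  obtain ⟨x, hxZ, hxZ'⟩ := Set.not_subset.mp h1
  obtain ⟨y, hyZc, hyZ'⟩ := Set.not_subset.mp h2
  have hp := hZ'.2.2 x hxZ' y hyZ'
  obtain ⟨a, b, ⟨ha', hb', e, he⟩, haZ, hbZ⟩ := cross_step hp hxZ hyZc
  have heT : e ∈ TermPts s t Z := by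
    rcases he with ⟨hs, ht⟩ | ⟨hs, ht⟩
    · exact Or.inl ⟨hs ▸ haZ, ht ▸ hbZ⟩
    · exact Or.inr ⟨ht ▸ haZ, hs ▸ hbZ⟩
  obtain ⟨hs', ht'⟩ := h e heT
  rcases he with ⟨hs, ht⟩ | ⟨hs, ht⟩
  · exact ha' (hs ▸ hs')
  · exact ha' (ht ▸ ht')
end

section
/- Let Z and Z' be 3-tails of a nodal curve C with Z ∧ Z' nonempty and Z ∪ Z' ≠ C. If exactly two of the three edges of Term_{Z'} lie in Z (i.e. have both endpoints in Z), then k_{Z∪Z'} ∈ {2,3}. -/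
open Set

/-!
Split the components into `A = Z \ Z'`, `B = Z ∩ Z'`, `D = Z' \ Z` and `W = (Z ∪ Z')ᶜ`.
If `D = ∅` then `Z ∪ Z' = Z`. Otherwise connectedness of `Z'`, `Zᶜ` and `Z'ᶜ` yields a `B`–`D`,
a `D`–`W` and an `A`–`W` edge (`A ≠ ∅` since the two edges of `Term_{Z'}` lying in `Z` join
`A` to `B`). Now `Term_{Z'}` holds those two edges and all `D`–`W` edges, so there is exactly
one `D`–`W` edge, while `Term_Z` holds the `Z`–`W` edges and a `B`–`D` edge, so there are one
or two `Z`–`W` edges. Hence `k_{Z ∪ Z'} = #(Z–W) + #(D–W) ∈ {2, 3}`.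
-/

theorem Set.ncard_add_ncard_le_of_disjoint {α : Type*} {X Y T : Set α} (h : Disjoint X Y)
    (hX : X ⊆ T) (hY : Y ⊆ T) (hT : T.Finite) : X.ncard + Y.ncard ≤ T.ncard := by
  rw [← ncard_union_eq h (hT.subset hX) (hT.subset hY)]
  exact ncard_le_ncard (union_subset hX hY) hT

section EdgesBetween

variable {V E : Type} (s t : E → V)

def edgesBetween (P Q : Set V) : Set E :=
  {e | (s e ∈ P ∧ t e ∈ Q) ∨ (t e ∈ P ∧ s e ∈ Q)}

variable {s t}

theorem edgesBetween_comm (P Q : Set V) : edgesBetween s t P Q = edgesBetween s t Q P := by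
  ext e
  simp only [edgesBetween, mem_ofPred_eq]
  tauto

theorem edgesBetween_mono {P P' Q Q' : Set V} (hP : P ⊆ P') (hQ : Q ⊆ Q') :
    edgesBetween s t P Q ⊆ edgesBetween s t P' Q' := by
  rintro e (⟨hs, ht⟩ | ⟨ht, hs⟩)
  exacts [Or.inl ⟨hP hs, hQ ht⟩, Or.inr ⟨hP ht, hQ hs⟩]

theorem edgesBetween_union_left (P P' Q : Set V) :
    edgesBetween s t (P ∪ P') Q = edgesBetween s t P Q ∪ edgesBetween s t P' Q := by
  ext e
  simp only [edgesBetween, mem_union, mem_ofPred_eq]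
  tauto

theorem disjoint_edgesBetween {P Q P' Q' : Set V} (h : Disjoint P (P' ∪ Q')) :
    Disjoint (edgesBetween s t P Q) (edgesBetween s t P' Q') := by
  refine Set.disjoint_left.2 fun e he he' => ?_
  have hends : s e ∈ P' ∪ Q' ∧ t e ∈ P' ∪ Q' := by
    rcases he' with ⟨hs, ht⟩ | ⟨ht, hs⟩
    exacts [⟨Or.inl hs, Or.inr ht⟩, ⟨Or.inr hs, Or.inl ht⟩]
  rcases he with ⟨hs, -⟩ | ⟨ht, -⟩
  exacts [Set.disjoint_left.1 h hs hends.1, Set.disjoint_left.1 h ht hends.2]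

theorem Set.Nonempty.left_of_edgesBetween {P Q : Set V} (h : (edgesBetween s t P Q).Nonempty) :
    P.Nonempty := by
  obtain ⟨e, ⟨hs, -⟩ | ⟨ht, -⟩⟩ := h
  exacts [⟨s e, hs⟩, ⟨t e, ht⟩]

theorem termPts_eq_edgesBetween (Z : Set V) : TermPts s t Z = edgesBetween s t Z Zᶜ := rfl

theorem edgesBetween_subset_termPts {P Q Z : Set V} (hP : P ⊆ Z) (hQ : Q ⊆ Zᶜ) :
    edgesBetween s t P Q ⊆ TermPts s t Z :=
  edgesBetween_mono hP hQ

theorem sep_termPts_eq_edgesBetween (X Y : Set V) :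
    {e ∈ TermPts s t Y | s e ∈ X ∧ t e ∈ X} = edgesBetween s t (X \ Y) (X ∩ Y) := by
  ext e
  simp only [TermPts, edgesBetween, mem_ofPred_eq, mem_sdiff, mem_inter_iff]
  tauto

theorem ConnOn.edgesBetween_nonempty {U P Q : Set V} (hU : ConnOn s t U) (hQ : U \ P ⊆ Q)
    {x y : V} (hx : x ∈ U ∩ P) (hy : y ∈ U \ P) : (edgesBetween s t P Q).Nonempty := by
  obtain ⟨hxU, hxP⟩ := hx
  obtain ⟨hyU, hyP⟩ := hy
  induction hU x hxU y hyU with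
  | refl => exact absurd hxP hyP
  | @tail b c _ hbc ih =>
    obtain ⟨hbU, hcU, e, he⟩ := hbc
    by_cases hbP : b ∈ P
    · refine ⟨e, ?_⟩
      rcases he with ⟨rfl, rfl⟩ | ⟨rfl, rfl⟩
      exacts [Or.inl ⟨hbP, hQ ⟨hcU, hyP⟩⟩, Or.inr ⟨hbP, hQ ⟨hcU, hyP⟩⟩]
    · exact ih hbU hbP

variable (s t) [Finite E]

theorem kcut_union_eq_add (Z Z' : Set V) :
    kcut s t (Z ∪ Z') = (edgesBetween s t Z (Z ∪ Z')ᶜ).ncard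
      + (edgesBetween s t (Z' \ Z) (Z ∪ Z')ᶜ).ncard := by
  have hsplit : edgesBetween s t (Z ∪ Z') (Z ∪ Z')ᶜ
      = edgesBetween s t Z (Z ∪ Z')ᶜ ∪ edgesBetween s t (Z' \ Z) (Z ∪ Z')ᶜ := by
    rw [← edgesBetween_union_left, union_sdiff_self]
  rw [kcut, termPts_eq_edgesBetween, hsplit, ncard_union_eq]
  exact disjoint_edgesBetween
    (disjoint_sdiff_right.union_right (disjoint_compl_right.mono_right
      (compl_subset_compl.2 subset_union_left)))

theorem ncard_edgesBetween_add_le_kcut_left (Z Z' : Set V) :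
    (edgesBetween s t Z (Z ∪ Z')ᶜ).ncard + (edgesBetween s t Z (Z' \ Z)).ncard ≤ kcut s t Z :=
  ncard_add_ncard_le_of_disjoint
    (edgesBetween_comm Z (Z ∪ Z')ᶜ ▸
      disjoint_edgesBetween (disjoint_compl_left.mono_right union_sdiff_self.le))
    (edgesBetween_subset_termPts subset_rfl (compl_subset_compl.2 subset_union_left))
    (edgesBetween_subset_termPts subset_rfl fun _ h => h.2) (toFinite _)

theorem ncard_edgesBetween_add_le_kcut_right (Z Z' : Set V) :
    (edgesBetween s t (Z \ Z') (Z ∩ Z')).ncard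
      + (edgesBetween s t (Z' \ Z) (Z ∪ Z')ᶜ).ncard ≤ kcut s t Z' :=
  ncard_add_ncard_le_of_disjoint
    (disjoint_edgesBetween <| disjoint_left.2 fun _ ⟨hvZ, _⟩ h =>
      h.elim (fun h => h.2 hvZ) (fun h => h (.inl hvZ)))
    (edgesBetween_comm (Z ∩ Z') (Z \ Z') ▸
      edgesBetween_subset_termPts inter_subset_right fun _ h => h.2)
    (edgesBetween_subset_termPts sdiff_subset (compl_subset_compl.2 subset_union_right))
    (toFinite _)

end EdgesBetween

theorem stmt_10_general {V E : Type} [Fintype E] (s t : E → V)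
    (Z Z' : Set V)
    (hZ : IsTail s t Z) (hZ' : IsTail s t Z')
    (hkZ : kcut s t Z = 3) (hkZ' : kcut s t Z' = 3)
    (hne : (Z ∩ Z').Nonempty) (hun : Z ∪ Z' ≠ Set.univ)
    (h2 : ({e ∈ TermPts s t Z' | s e ∈ Z ∧ t e ∈ Z}).ncard = 2) :
    kcut s t (Z ∪ Z') ∈ ({2, 3} : Set ℕ) := by
  obtain ⟨-, -, hZc⟩ := hZ
  obtain ⟨-, hZ'conn, hZ'c⟩ := hZ'
  by_cases hD : Z' ⊆ Z
  · simp [union_eq_left.2 hD, hkZ]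
  obtain ⟨d, hdZ', hdZ⟩ := not_subset.1 hD
  obtain ⟨b, hbZ, hbZ'⟩ := hne
  obtain ⟨w, hw⟩ := nonempty_compl.2 hun
  rw [sep_termPts_eq_edgesBetween] at h2
  obtain ⟨a, haZ, haZ'⟩ := (nonempty_of_ncard_ne_zero (h2 ▸ two_ne_zero)).left_of_edgesBetween
  have hZW : (edgesBetween s t Z (Z ∪ Z')ᶜ).Nonempty :=
    hZ'c.edgesBetween_nonempty (fun v ⟨hvZ', hvZ⟩ h => h.elim hvZ hvZ')
      ⟨haZ', haZ⟩ ⟨hw ∘ .inr, hw ∘ .inl⟩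
  have hZD : (edgesBetween s t Z (Z' \ Z)).Nonempty :=
    hZ'conn.edgesBetween_nonempty subset_rfl ⟨hbZ', hbZ⟩ ⟨hdZ', hdZ⟩
  have hDW : (edgesBetween s t (Z' \ Z) (Z ∪ Z')ᶜ).Nonempty :=
    hZc.edgesBetween_nonempty (fun v ⟨hvZ, hvD⟩ h => h.elim hvZ fun hvZ' => hvD ⟨hvZ', hvZ⟩)
      ⟨hdZ, hdZ', hdZ⟩ ⟨hw ∘ .inl, hw ∘ .inr ∘ And.left⟩
  have := ncard_edgesBetween_add_le_kcut_left s t Z Z'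
  have := ncard_edgesBetween_add_le_kcut_right s t Z Z'
  have := hZW.ncard_pos
  have := hZD.ncard_pos
  have := hDW.ncard_pos
  rw [kcut_union_eq_add, mem_insert_iff, mem_singleton_iff]
  omega

/-- Lemma 4.4 (i): if `Z, Z'` are 3-tails with `Z ∧ Z'` nonempty and
`Z ∪ Z' ≠ C`, and exactly two edges of `Term_{Z'}` lie in `Z` (both endpoints
in `Z`), then `k_{Z∪Z'} ∈ {2, 3}`. -/
theorem stmt_10 {V E : Type} [Fintype V] [Fintype E] (s t : E → V)
    (hC : ConnOn s t Set.univ) (Z Z' : Set V)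
    (hZ : IsTail s t Z) (hZ' : IsTail s t Z')
    (hkZ : kcut s t Z = 3) (hkZ' : kcut s t Z' = 3)
    (hne : (Z ∩ Z').Nonempty) (hun : Z ∪ Z' ≠ Set.univ)
    (h2 : ({e ∈ TermPts s t Z' | s e ∈ Z ∧ t e ∈ Z}).ncard = 2) :
    kcut s t (Z ∪ Z') ∈ ({2, 3} : Set ℕ) :=
  stmt_10_general s t Z Z' hZ hZ' hkZ hkZ' hne hun h2
end

section
/- Let C be a nodal curve with components C_1,…,C_p and let T²_{i,j} be the set of nested 2-tails of C with respect to (i,j). If Z is any 2-tail of C such that C_i ∪ C_j ⊆ Z and C_1 ⊆ Z^c, then there exists a tail W ∈ T²_{i,j} with W ⊆ Z and Term_W ∩ Term_Z ≠ ∅ (W is Z-terminal). -/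
open Set

/-- `S²_{i,j}`: the 2-tails containing `vi, vj` and omitting `v1`. -/
def S2set {V E : Type} (s t : E → V) (v1 vi vj : V) : Set (Set V) :=
  {Z | IsTail s t Z ∧ kcut s t Z = 2 ∧ vi ∈ Z ∧ vj ∈ Z ∧ v1 ∉ Z}

/-- The levels of the inductive construction of the set of nested tails:
level `0` is `S` itself, and level `m+1` consists of the members `Z` of `S`
with `W_m ◁ Z`, where `W_m` is the intersection of the members of level `m`. -/
def Tlevel {V E : Type} (s t : E → V) (S : Set (Set V)) : ℕ → Set (Set V)
  | 0 => S
  | (m + 1) =>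
      {Z | Z ∈ S ∧ ⋂₀ Tlevel s t S m ⊂ Z ∧ FreePair s t (⋂₀ Tlevel s t S m) Z}

/-- The set of nested tails extracted from `S`: the tails `W_m = ⋂ (level m)`
for all `m` with level `m` nonempty. -/
def Tset {V E : Type} (s t : E → V) (S : Set (Set V)) : Set (Set V) :=
  {X | ∃ m, (Tlevel s t S m).Nonempty ∧ X = ⋂₀ Tlevel s t S m}

/-- `T²_{i,j}`, the set of nested 2-tails with respect to `(i, j)`. -/
def T2set {V E : Type} (s t : E → V) (v1 vi vj : V) : Set (Set V) :=
  Tset s t (S2set s t v1 vi vj)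

/-- `S³_{i,j}`: the `T²_{i,j}`-free 3-tails containing `vi, vj`, omitting `v1`. -/
def S3set {V E : Type} (s t : E → V) (v1 vi vj : V) : Set (Set V) :=
  {Z | IsTail s t Z ∧ kcut s t Z = 3 ∧ vi ∈ Z ∧ vj ∈ Z ∧ v1 ∉ Z ∧
        ∀ W ∈ T2set s t v1 vi vj, FreePair s t Z W}

/-- `T³_{i,j}`, the set of nested 3-tails with respect to `(i, j)`. -/
def T3set {V E : Type} (s t : E → V) (v1 vi vj : V) : Set (Set V) :=
  Tset s t (S3set s t v1 vi vj)

/-- In a connected graph, any nonempty proper vertex subset has a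
nonempty edge cut. -/
lemma termpts_nonempty {V E : Type} (s t : E → V)
    (hC : ConnOn s t Set.univ) (W : Set V) (hne : W.Nonempty)
    (hprop : W ≠ Set.univ) : (TermPts s t W).Nonempty := by
  obtain ⟨x, hx⟩ := hne
  have : ∃ y, y ∉ W := by
    by_contra h
    push_neg at h
    exact hprop (Set.eq_univ_of_forall h)
  obtain ⟨y, hy⟩ := this
  have hrtg := hC x (Set.mem_univ x) y (Set.mem_univ y)
  clear hprop
  induction hrtg with
  | refl => exact absurd hx hy
  | tail hab hbc ih =>
    rename_i b c
    by_cases hb : b ∈ W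
    · obtain ⟨-, -, e, he⟩ := hbc
      refine ⟨e, ?_⟩
      rcases he with ⟨hs, ht⟩ | ⟨hs, ht⟩
      · exact Or.inl ⟨hs ▸ hb, ht ▸ hy⟩
      · exact Or.inr ⟨ht ▸ hb, hs ▸ hy⟩
    · exact ih hb

/-- The cut of an intersection is contained in the union of the cuts. -/
lemma termpts_sInter_subset {V E : Type} (s t : E → V) (T : Set (Set V)) :
    TermPts s t (⋂₀ T) ⊆ ⋃ A ∈ T, TermPts s t A := by
  rintro e (⟨hs, ht⟩ | ⟨hs, ht⟩)
  · rw [Set.mem_sInter] at ht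
    push_neg at ht
    obtain ⟨A, hA, htA⟩ := ht
    exact Set.mem_biUnion hA (Or.inl ⟨Set.mem_sInter.1 hs A hA, htA⟩)
  · rw [Set.mem_sInter] at ht
    push_neg at ht
    obtain ⟨A, hA, htA⟩ := ht
    exact Set.mem_biUnion hA (Or.inr ⟨Set.mem_sInter.1 hs A hA, htA⟩)

lemma tlevel_subset {V E : Type} (s t : E → V) (S : Set (Set V)) :
    ∀ m, Tlevel s t S m ⊆ S
  | 0 => subset_rfl
  | (m + 1) => fun _ h => h.1

/-- Corollary 4.2: every 2-tail `Z` containing `C_i ∪ C_j` with `C_1 ⊆ Zᶜ`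
contains a `Z`-terminal member of `T²_{i,j}`. -/
theorem stmt_12 {V E : Type} [Fintype V] [Fintype E] (s t : E → V)
    (hC : ConnOn s t Set.univ) (v1 vi vj : V) (Z : Set V)
    (hZ : IsTail s t Z) (hk : kcut s t Z = 2)
    (hi : vi ∈ Z) (hj : vj ∈ Z) (h1 : v1 ∉ Z) :
    ∃ W ∈ T2set s t v1 vi vj,
      W ⊆ Z ∧ TermPts s t W ∩ TermPts s t Z ≠ ∅ := by
  by_contra hcon
  push_neg at hcon
  set S := S2set s t v1 vi vj with hS
  have hZS : Z ∈ S := ⟨hZ, hk, hi, hj, h1⟩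
  -- basic facts
  have hZter : (TermPts s t Z).Nonempty :=
    termpts_nonempty s t hC Z ⟨vi, hi⟩ (fun h => h1 (h ▸ Set.mem_univ v1))
  have hWsub : ∀ m, Z ∈ Tlevel s t S m → ⋂₀ Tlevel s t S m ⊆ Z :=
    fun m hm => Set.sInter_subset_of_mem hm
  have hWvi : ∀ m, vi ∈ ⋂₀ Tlevel s t S m := by
    intro m
    exact Set.mem_sInter.2 fun A hA => (tlevel_subset s t S m hA).2.2.1
  -- Z belongs to every level
  have hZlevel : ∀ m, Z ∈ Tlevel s t S m := by
    intro m
    induction m with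
    | zero => exact hZS
    | succ m ih =>
      have hne : (Tlevel s t S m).Nonempty := ⟨Z, ih⟩
      have hmem : ⋂₀ Tlevel s t S m ∈ T2set s t v1 vi vj := ⟨m, hne, rfl⟩
      have hfree : TermPts s t (⋂₀ Tlevel s t S m) ∩ TermPts s t Z = ∅ :=
        hcon _ hmem (hWsub m ih)
      have hssub : ⋂₀ Tlevel s t S m ⊂ Z := by
        refine ⟨hWsub m ih, fun hle => ?_⟩
        have heq : ⋂₀ Tlevel s t S m = Z := le_antisymm (hWsub m ih) hle
        rw [heq, Set.inter_self] at hfree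
        exact hZter.ne_empty hfree
      exact ⟨hZS, hssub, hfree⟩
  -- strict monotonicity of the W_m
  have hstrict : ∀ m, ⋂₀ Tlevel s t S m ⊂ ⋂₀ Tlevel s t S (m + 1) := by
    intro m
    have hsub : ⋂₀ Tlevel s t S m ⊆ ⋂₀ Tlevel s t S (m + 1) :=
      Set.subset_sInter fun A hA => hA.2.1.1
    refine ⟨hsub, fun hle => ?_⟩
    have heq : ⋂₀ Tlevel s t S m = ⋂₀ Tlevel s t S (m + 1) :=
      le_antisymm hsub hle
    have hdisj : TermPts s t (⋂₀ Tlevel s t S m) ∩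
        TermPts s t (⋂₀ Tlevel s t S (m + 1)) = ∅ := by
      apply Set.eq_empty_of_forall_notMem
      rintro e ⟨he1, he2⟩
      obtain ⟨A, hA, heA⟩ := Set.mem_iUnion₂.1 (termpts_sInter_subset s t _ he2)
      have : e ∈ TermPts s t (⋂₀ Tlevel s t S m) ∩ TermPts s t A := ⟨he1, heA⟩
      rw [hA.2.2] at this
      exact this
    rw [← heq, Set.inter_self] at hdisj
    have hne : ((⋂₀ Tlevel s t S m) : Set V).Nonempty := ⟨vi, hWvi m⟩
    have hprop : (⋂₀ Tlevel s t S m) ≠ Set.univ := by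
      intro h
      exact h1 (hWsub m (hZlevel m) (h ▸ Set.mem_univ v1))
    exact (termpts_nonempty s t hC _ hne hprop).ne_empty hdisj
  -- cardinality contradiction
  have hcard : ∀ m, m ≤ (⋂₀ Tlevel s t S m).ncard := by
    intro m
    induction m with
    | zero => exact Nat.zero_le _
    | succ m ih =>
      have := Set.ncard_lt_ncard (hstrict m) (Set.toFinite _)
      omega
  have hle : (⋂₀ Tlevel s t S (Fintype.card V + 1)).ncard ≤ Fintype.card V := by
    have := Set.ncard_le_ncard (Set.subset_univ (⋂₀ Tlevel s t S (Fintype.card V + 1)))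
      (Set.toFinite _)
    simpa [Set.ncard_univ, Nat.card_eq_fintype_card] using this
  have := hcard (Fintype.card V + 1)
  omega
end

section
/- Let Z be a tail of a nodal curve C. There do not exist distinct tails W and W' of C with k_W = 2 and k_{W'} = 3 satisfying all of: (i) (W,W') is free; (ii) Z ⊆ W ∧ W'; (iii) Term_Z ⊆ Term_W ∪ Term_{W'}; (iv) Z ≠ W ∧ W' and Z ∪ (W∧W')^c ≠ C (equivalently k_{W∪W'} ≥ 1, i.e. W ∪ W' ≠ C). -/
open Set

private lemma crossing {α : Type*} {R : α → α → Prop} {P : Set α} :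
    ∀ {x y : α}, Relation.ReflTransGen R x y → x ∈ P → y ∉ P →
      ∃ a b, a ∈ P ∧ b ∉ P ∧ R a b := by
  intro x y h
  induction h with
  | refl => intro hx hy; exact absurd hx hy
  | @tail b c _ hbc ih =>
      intro hx hc
      by_cases hb : b ∈ P
      · exact ⟨b, c, hb, hc, hbc⟩
      · exact ih hx hb

private lemma term_of {V E : Type} (s t : E → V) (W : Set V) {e : E} {a b : V}
    (h : (s e = a ∧ t e = b) ∨ (s e = b ∧ t e = a)) (ha : a ∈ W) (hb : b ∉ W) :
    e ∈ TermPts s t W := by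
  rcases h with ⟨rfl, rfl⟩ | ⟨rfl, rfl⟩
  · exact Or.inl ⟨ha, hb⟩
  · exact Or.inr ⟨ha, hb⟩

private lemma edge_ep {V E : Type} {s t : E → V} {e : E} {a b a' b' : V}
    (h : (s e = a ∧ t e = b) ∨ (s e = b ∧ t e = a))
    (h' : (s e = a' ∧ t e = b') ∨ (s e = b' ∧ t e = a')) :
    a = a' ∨ a = b' := by
  rcases h with ⟨rfl, rfl⟩ | ⟨rfl, rfl⟩ <;>
    rcases h' with ⟨h1, h2⟩ | ⟨h1, h2⟩ <;> tauto

/-- Lemma 5.3: for a tail `Z`, there are no distinct tails `W, W'` with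
`k_W = 2`, `k_{W'} = 3`, `(W, W')` free, `Z ⊆ W ∧ W'`,
`Term_Z ⊆ Term_W ∪ Term_{W'}`, `Z ≠ W ∧ W'` and `W ∪ W' ≠ C`. -/
theorem stmt_16 {V E : Type} [Fintype V] [Fintype E] (s t : E → V)
    (hC : ConnOn s t Set.univ) (Z : Set V) (hZ : IsTail s t Z) :
    ¬ ∃ W W' : Set V, W ≠ W' ∧ IsTail s t W ∧ IsTail s t W' ∧
        kcut s t W = 2 ∧ kcut s t W' = 3 ∧
        FreePair s t W W' ∧
        Z ⊆ W ∩ W' ∧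
        TermPts s t Z ⊆ TermPts s t W ∪ TermPts s t W' ∧
        Z ≠ W ∩ W' ∧
        W ∪ W' ≠ Set.univ := by
  rintro ⟨W, W', hne, hW, hW', hkW, hkW', hfree, hZsub, hTermZ, hZne, hUnion⟩
  classical
  -- basic points
  obtain ⟨z, hz⟩ := hZ.1.1
  have hzA : z ∈ W ∩ W' := hZsub hz
  obtain ⟨y, hyA, hyZ⟩ : ∃ y, y ∈ W ∩ W' ∧ y ∉ Z := by
    by_contra h
    push_neg at h
    exact hZne (Set.Subset.antisymm hZsub fun x hx => h x hx)
  -- no edges between Z and Y = (W ∩ W') \ Z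
  have hZY : ∀ (e : E) (a b : V), ((s e = a ∧ t e = b) ∨ (s e = b ∧ t e = a)) →
      a ∈ Z → b ∈ W ∩ W' → b ∉ Z → False := by
    intro e a b hedge ha hb hbz
    have he : e ∈ TermPts s t Z := term_of s t Z hedge ha hbz
    have haA : a ∈ W ∩ W' := hZsub ha
    rcases hTermZ he with h | h <;>
    · rcases hedge with ⟨h1, h2⟩ | ⟨h1, h2⟩ <;>
        rcases h with ⟨_, h4⟩ | ⟨_, h4⟩ <;>
        first
          | exact h4 (h1 ▸ haA.1) | exact h4 (h2 ▸ haA.1)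
          | exact h4 (h1 ▸ hb.1) | exact h4 (h2 ▸ hb.1)
          | exact h4 (h1 ▸ haA.2) | exact h4 (h2 ▸ haA.2)
          | exact h4 (h1 ▸ hb.2) | exact h4 (h2 ▸ hb.2)
  -- edge from Z to W' \ W  (via connectivity of W')
  obtain ⟨a₁, b₁, ha₁, hb₁Z, _, hb₁W', e₁, he₁⟩ :
      ∃ a b, a ∈ Z ∧ b ∉ Z ∧ a ∈ W' ∧ b ∈ W' ∧
        ∃ e, (s e = a ∧ t e = b) ∨ (s e = b ∧ t e = a) := by
    obtain ⟨a, b, ha, hb, h1, h2, e, he⟩ :=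
      crossing (hW'.2.1 z hzA.2 y hyA.2) hz hyZ
    exact ⟨a, b, ha, hb, h1, h2, e, he⟩
  have hb₁ : b₁ ∈ W' \ W := by
    refine ⟨hb₁W', fun hbW => hZY e₁ a₁ b₁ he₁ ha₁ ⟨hbW, hb₁W'⟩ hb₁Z⟩
  have he₁W : e₁ ∈ TermPts s t W := term_of s t W he₁ (hZsub ha₁).1 hb₁.2
  -- edge from Y to W' \ W  (via connectivity of W')
  obtain ⟨a₂, b₂, ha₂, hb₂Y, _, hb₂W', e₂, he₂⟩ :
      ∃ a b, a ∈ (W ∩ W') \ Z ∧ b ∉ (W ∩ W') \ Z ∧ a ∈ W' ∧ b ∈ W' ∧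
        ∃ e, (s e = a ∧ t e = b) ∨ (s e = b ∧ t e = a) := by
    obtain ⟨a, b, ha, hb, h1, h2, e, he⟩ :=
      crossing (P := (W ∩ W') \ Z)
        (hW'.2.1 y hyA.2 z hzA.2) ⟨hyA, hyZ⟩
        (fun hzY => hzY.2 hz)
    exact ⟨a, b, ha, hb, h1, h2, e, he⟩
  have hb₂ : b₂ ∈ W' \ W := by
    refine ⟨hb₂W', fun hbW => ?_⟩
    by_cases hbZ : b₂ ∈ Z
    · exact hZY e₂ b₂ a₂ (Or.symm he₂) hbZ ⟨ha₂.1.1, ha₂.1.2⟩ ha₂.2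
    · exact hb₂Y ⟨⟨hbW, hb₂W'⟩, hbZ⟩
  have he₂W : e₂ ∈ TermPts s t W := term_of s t W he₂ ha₂.1.1 hb₂.2
  -- edge from Z to W \ W'  (via connectivity of W); gives a point of W \ W'
  obtain ⟨a₃, b₃, ha₃, hb₃Z, _, hb₃W, e₃, he₃⟩ :
      ∃ a b, a ∈ Z ∧ b ∉ Z ∧ a ∈ W ∧ b ∈ W ∧
        ∃ e, (s e = a ∧ t e = b) ∨ (s e = b ∧ t e = a) := by
    obtain ⟨a, b, ha, hb, h1, h2, e, he⟩ :=
      crossing (hW.2.1 z hzA.1 y hyA.1) hz hyZ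
    exact ⟨a, b, ha, hb, h1, h2, e, he⟩
  have hb₃ : b₃ ∈ W \ W' := by
    refine ⟨hb₃W, fun hbW' => hZY e₃ a₃ b₃ he₃ ha₃ ⟨hb₃W, hbW'⟩ hb₃Z⟩
  -- the two edges e₁, e₂ are distinct
  have h12 : e₁ ≠ e₂ := by
    intro h
    rcases edge_ep he₁ (h ▸ he₂) with rfl | rfl
    · exact ha₂.2 ha₁
    · exact hb₂.2 (hZsub ha₁).1
  -- no edge from W \ W' to the complement of W ∪ W'
  have hq : ∀ (e : E) (a b : V), ((s e = a ∧ t e = b) ∨ (s e = b ∧ t e = a)) →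
      a ∈ W \ W' → b ∉ W ∪ W' → False := by
    intro e a b hedge ha hb
    have heW : e ∈ TermPts s t W := term_of s t W hedge ha.1 fun h => hb (Or.inl h)
    have h1e : e₁ ≠ e := by
      intro h
      rcases edge_ep he₁ (h ▸ hedge) with rfl | rfl
      · exact ha.2 (hZsub ha₁).2
      · exact hb (Or.inr (hZsub ha₁).2)
    have h2e : e₂ ≠ e := by
      intro h
      rcases edge_ep he₂ (h ▸ hedge) with rfl | rfl
      · exact ha.2 ha₂.1.2
      · exact hb (Or.inr ha₂.1.2)
    have hsub : ({e₁, e₂, e} : Set E) ⊆ TermPts s t W := by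
      intro x hx
      rcases hx with rfl | rfl | rfl
      · exact he₁W
      · exact he₂W
      · exact heW
    have h3 : ({e₁, e₂, e} : Set E).ncard = 3 := by
      rw [Set.ncard_insert_of_notMem (by simp [h12, h1e]),
        Set.ncard_pair h2e]
    have := Set.ncard_le_ncard hsub (Set.toFinite _)
    rw [h3] at this
    rw [kcut] at hkW
    omega
  -- a point outside W ∪ W'
  obtain ⟨o, ho⟩ : ∃ o, o ∉ W ∪ W' := by
    by_contra h
    push_neg at h
    exact hUnion (Set.eq_univ_of_forall h)
  -- connectivity of W'ᶜ gives an edge from W \ W' out of W ∪ W' : contradiction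
  obtain ⟨a, b, ha, hb, _, hbC, e, he⟩ :=
    crossing (P := W \ W')
      (hW'.2.2 b₃ hb₃.2 o fun h => ho (Or.inr h)) hb₃
      (fun hoW => ho (Or.inl hoW.1))
  exact hq e a b he ha fun h => by
    rcases h with h | h
    · exact hb ⟨h, hbC⟩
    · exact hbC h
end
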